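/- arXiv:1405.6385 — 5 statements merged into one kernel-verified Lean document; each statement's English description precedes it below -/
import Mathlib

section
/- Let a, b ∈ ℚ with -4a³ - 27b² ≠ 0 and let θ₁, θ₂, θ₃ ∈ ℂ be the (necessarily distinct) roots of x³ + ax + b. Then for all t, a₀, a₁, a₂ ∈ ℚ, the three equations f₁ = 0, g₁ = 0, h₁ = 0 hold simultaneously if and only if for every j ∈ {1,2,3} one has (a₀ + a₁θⱼ + a₂θⱼ²)² = t² - (2/3)θⱼ·t - (2θⱼ² + a)/9. -/
/-!
Reducing the square of `a₀ + a₁θ + a₂θ²` modulo the cubic `θ³ + aθ + b`, the difference of the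
two sides of the identity at a root `θ` is `f₁θ² + g₁θ + h₁`. So the identity holds at all three
roots iff this quadratic in `θ` has three roots, and the roots are distinct because their
Vandermonde product squares to the discriminant `-4a³ - 27b²`.
-/

section Cubic

variable {R : Type*} [CommRing R] {a b θ₁ θ₂ θ₃ : R}

theorem cubic_eval_eq_zero_of_mem_roots
    (hroots : ∀ x : R, x ^ 3 + a * x + b = (x - θ₁) * (x - θ₂) * (x - θ₃))
    {θ : R} (hθ : θ ∈ ({θ₁, θ₂, θ₃} : Set R)) : θ ^ 3 + a * θ + b = 0 := by
  rw [hroots]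
  rcases hθ with rfl | rfl | rfl <;> ring

theorem cubic_vieta [IsDomain R] (h2 : (2 : R) ≠ 0)
    (hroots : ∀ x : R, x ^ 3 + a * x + b = (x - θ₁) * (x - θ₂) * (x - θ₃)) :
    θ₁ + θ₂ + θ₃ = 0 ∧ θ₁ * θ₂ + θ₁ * θ₃ + θ₂ * θ₃ = a ∧ θ₁ * θ₂ * θ₃ = -b := by
  have e3 : θ₁ * θ₂ * θ₃ = -b := by linear_combination hroots 0
  have e2 : θ₁ * θ₂ + θ₁ * θ₃ + θ₂ * θ₃ = a := by
    have h : 2 * (θ₁ * θ₂ + θ₁ * θ₃ + θ₂ * θ₃) = 2 * a := by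
      linear_combination hroots (-1) - hroots 1
    exact mul_left_cancel₀ h2 h
  exact ⟨by linear_combination hroots 1 + e2 - e3, e2, e3⟩

theorem cubic_discr_eq_sq_vandermonde (e1 : θ₁ + θ₂ + θ₃ = 0)
    (e2 : θ₁ * θ₂ + θ₁ * θ₃ + θ₂ * θ₃ = a) (e3 : θ₁ * θ₂ * θ₃ = -b) :
    -4 * a ^ 3 - 27 * b ^ 2 = ((θ₁ - θ₂) * (θ₁ - θ₃) * (θ₂ - θ₃)) ^ 2 := by
  obtain rfl : θ₃ = -θ₁ - θ₂ := by linear_combination e1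
  obtain rfl := e2
  obtain rfl : b = θ₁ ^ 2 * θ₂ + θ₁ * θ₂ ^ 2 := by linear_combination e3
  ring

theorem cubic_roots_ne_of_discr_ne_zero [IsDomain R] (h2 : (2 : R) ≠ 0)
    (hroots : ∀ x : R, x ^ 3 + a * x + b = (x - θ₁) * (x - θ₂) * (x - θ₃))
    (hD : -4 * a ^ 3 - 27 * b ^ 2 ≠ 0) : θ₁ ≠ θ₂ ∧ θ₁ ≠ θ₃ ∧ θ₂ ≠ θ₃ := by
  obtain ⟨e1, e2, e3⟩ := cubic_vieta h2 hroots
  rw [cubic_discr_eq_sq_vandermonde e1 e2 e3] at hD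
  refine ⟨?_, ?_, ?_⟩ <;> rintro h <;> simp [h] at hD

end Cubic

theorem quadratic_coeffs_eq_zero_of_three_roots {K : Type*} [Field K] {F G H x y z : K}
    (hxy : x ≠ y) (hxz : x ≠ z) (hyz : y ≠ z) (hx : F * x ^ 2 + G * x + H = 0)
    (hy : F * y ^ 2 + G * y + H = 0) (hz : F * z ^ 2 + G * z + H = 0) :
    F = 0 ∧ G = 0 ∧ H = 0 := by
  have hxy' : F * (x + y) + G = 0 :=
    (mul_eq_zero.mp (by linear_combination hx - hy : (x - y) * (F * (x + y) + G) = 0)).resolve_left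
      (sub_ne_zero.mpr hxy)
  have hxz' : F * (x + z) + G = 0 :=
    (mul_eq_zero.mp (by linear_combination hx - hz : (x - z) * (F * (x + z) + G) = 0)).resolve_left
      (sub_ne_zero.mpr hxz)
  have hF : F = 0 :=
    (mul_eq_zero.mp (by linear_combination hxy' - hxz' : (y - z) * F = 0)).resolve_left
      (sub_ne_zero.mpr hyz)
  have hG : G = 0 := by linear_combination hxy' - (x + y) * hF
  exact ⟨hF, hG, by linear_combination hx - x ^ 2 * hF - x * hG⟩

section TwistedModularCurve

variable {K : Type*} [Field K]

theorem sq_sub_eq_quadratic_add_mul_cubic (a b t a₀ a₁ a₂ θ : K) :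
    (a₀ + a₁ * θ + a₂ * θ ^ 2) ^ 2 - (t ^ 2 - 2 / 3 * θ * t - (2 * θ ^ 2 + a) / 9) =
      (-a * a₂ ^ 2 + 2 * a₀ * a₂ + a₁ ^ 2 + 2 / 9) * θ ^ 2 +
        (-2 * a * a₁ * a₂ - b * a₂ ^ 2 + 2 * a₀ * a₁ + 2 / 3 * t) * θ +
        (-2 * b * a₁ * a₂ + a₀ ^ 2 - t ^ 2 + a / 9) +
        (a₂ ^ 2 * θ + 2 * a₁ * a₂) * (θ ^ 3 + a * θ + b) := by
  ring

theorem sq_eq_iff_quadratic_eq_zero {a b t a₀ a₁ a₂ θ : K} (hθ : θ ^ 3 + a * θ + b = 0) :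
    (a₀ + a₁ * θ + a₂ * θ ^ 2) ^ 2 = t ^ 2 - 2 / 3 * θ * t - (2 * θ ^ 2 + a) / 9 ↔
      (-a * a₂ ^ 2 + 2 * a₀ * a₂ + a₁ ^ 2 + 2 / 9) * θ ^ 2 +
        (-2 * a * a₁ * a₂ - b * a₂ ^ 2 + 2 * a₀ * a₁ + 2 / 3 * t) * θ +
        (-2 * b * a₁ * a₂ + a₀ ^ 2 - t ^ 2 + a / 9) = 0 := by
  rw [← sub_eq_zero, sq_sub_eq_quadratic_add_mul_cubic, hθ, mul_zero, add_zero]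

theorem twistedModularCurve_eight_iff_forall_roots (h2 : (2 : K) ≠ 0) {a b θ₁ θ₂ θ₃ : K}
    (hD : -4 * a ^ 3 - 27 * b ^ 2 ≠ 0)
    (hroots : ∀ x : K, x ^ 3 + a * x + b = (x - θ₁) * (x - θ₂) * (x - θ₃)) (t a₀ a₁ a₂ : K) :
    (-a * a₂ ^ 2 + 2 * a₀ * a₂ + a₁ ^ 2 + 2 / 9 = 0 ∧
      -2 * a * a₁ * a₂ - b * a₂ ^ 2 + 2 * a₀ * a₁ + 2 / 3 * t = 0 ∧
      -2 * b * a₁ * a₂ + a₀ ^ 2 - t ^ 2 + a / 9 = 0) ↔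
    ∀ θ ∈ ({θ₁, θ₂, θ₃} : Set K),
      (a₀ + a₁ * θ + a₂ * θ ^ 2) ^ 2 = t ^ 2 - 2 / 3 * θ * t - (2 * θ ^ 2 + a) / 9 := by
  have hroot := fun θ hθ => sq_eq_iff_quadratic_eq_zero (t := t) (a₀ := a₀) (a₁ := a₁) (a₂ := a₂)
    (cubic_eval_eq_zero_of_mem_roots hroots (θ := θ) hθ)
  constructor
  · rintro ⟨hf, hg, hh⟩ θ hθ
    rw [hroot θ hθ, hf, hg, hh]
    ring
  · intro H
    obtain ⟨h12, h13, h23⟩ := cubic_roots_ne_of_discr_ne_zero h2 hroots hD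
    exact quadratic_coeffs_eq_zero_of_three_roots h12 h13 h23
      ((hroot θ₁ (by simp)).mp (H θ₁ (by simp))) ((hroot θ₂ (by simp)).mp (H θ₂ (by simp)))
      ((hroot θ₃ (by simp)).mp (H θ₃ (by simp)))

end TwistedModularCurve

/-- Theorem 1.1 of the paper: the defining equations of `X_E(8)` hold iff the
coefficient-comparison identity holds at each root of `x³ + ax + b`. -/
theorem stmt_0 (a b : ℚ) (hD : -4 * a ^ 3 - 27 * b ^ 2 ≠ 0)
    (θ₁ θ₂ θ₃ : ℂ)
    (hroots : ∀ x : ℂ, x ^ 3 + (a : ℂ) * x + (b : ℂ) = (x - θ₁) * (x - θ₂) * (x - θ₃))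
    (t a₀ a₁ a₂ : ℚ) :
    (-a * a₂ ^ 2 + 2 * a₀ * a₂ + a₁ ^ 2 + 2 / 9 = 0 ∧
      -2 * a * a₁ * a₂ - b * a₂ ^ 2 + 2 * a₀ * a₁ + 2 / 3 * t = 0 ∧
      -2 * b * a₁ * a₂ + a₀ ^ 2 - t ^ 2 + a / 9 = 0) ↔
    ∀ θ ∈ ({θ₁, θ₂, θ₃} : Set ℂ),
      ((a₀ : ℂ) + (a₁ : ℂ) * θ + (a₂ : ℂ) * θ ^ 2) ^ 2 =
        (t : ℂ) ^ 2 - 2 / 3 * θ * (t : ℂ) - (2 * θ ^ 2 + (a : ℂ)) / 9 := by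
  have hDC : -4 * (a : ℂ) ^ 3 - 27 * (b : ℂ) ^ 2 ≠ 0 := by exact_mod_cast hD
  simp only [← Rat.cast_eq_zero (α := ℂ)]
  push_cast
  exact twistedModularCurve_eight_iff_forall_roots two_ne_zero hDC hroots t a₀ a₁ a₂
end

section
/- Let a, b ∈ ℚ with D := -4a³ - 27b² ≠ 0 and let θ₁, θ₂, θ₃ ∈ ℂ be the (necessarily distinct) roots of x³ + ax + b. Then for all t, a₀, a₁, a₂ ∈ ℚ, the three equations f₅ = 0, g₅ = 0, h₅ = 0 hold simultaneously if and only if for every j ∈ {1,2,3} one has (a₀ + a₁θⱼ + a₂θⱼ²)² = D·(t² - (2/3)θⱼ·t - (2θⱼ² + a)/9). -/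
/-!
Reduced modulo `θ³ + aθ + b`, the difference of the two sides of the identity at a root `θ` is the
quadratic `f₅ θ² + g₅ θ + h₅`. Since `D` is the discriminant of `x³ + ax + b`, the three roots are
distinct when `D ≠ 0`, and a quadratic vanishing at three distinct points has zero coefficients.
-/

namespace TwistedModularCurve

section Field

variable {K : Type*} [Field K]

def f₅ (a D a₀ a₁ a₂ : K) : K := -a * a₂ ^ 2 + 2 * a₀ * a₂ + a₁ ^ 2 + 2 * D / 9

def g₅ (a b D t a₀ a₁ a₂ : K) : K := -2 * a * a₁ * a₂ - b * a₂ ^ 2 + 2 * a₀ * a₁ + 2 * D / 3 * t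

def h₅ (a b D t a₀ a₁ a₂ : K) : K := -2 * b * a₁ * a₂ + a₀ ^ 2 + D * (-t ^ 2 + a / 9)

theorem sq_sub_eq_quadratic_of_isRoot {a b D t a₀ a₁ a₂ θ : K} (hθ : θ ^ 3 + a * θ + b = 0) :
    (a₀ + a₁ * θ + a₂ * θ ^ 2) ^ 2 - D * (t ^ 2 - 2 / 3 * θ * t - (2 * θ ^ 2 + a) / 9) =
      f₅ a D a₀ a₁ a₂ * θ ^ 2 + g₅ a b D t a₀ a₁ a₂ * θ + h₅ a b D t a₀ a₁ a₂ := by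
  unfold f₅ g₅ h₅
  linear_combination (a₂ ^ 2 * θ + 2 * a₁ * a₂) * hθ

theorem quadratic_eval_three_eq_zero_iff {c₀ c₁ c₂ θ₁ θ₂ θ₃ : K}
    (h₁₂ : θ₁ ≠ θ₂) (h₁₃ : θ₁ ≠ θ₃) (h₂₃ : θ₂ ≠ θ₃) :
    (∀ θ ∈ ({θ₁, θ₂, θ₃} : Set K), c₂ * θ ^ 2 + c₁ * θ + c₀ = 0) ↔
      c₂ = 0 ∧ c₁ = 0 ∧ c₀ = 0 := by
  constructor
  · intro h
    have q₁ := h θ₁ (by simp)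
    have q₂ := h θ₂ (by simp)
    have q₃ := h θ₃ (by simp)
    -- Vandermonde cofactors eliminate `c₀` and `c₁`.
    have hc₂ : c₂ = 0 := by
      have : c₂ * ((θ₁ - θ₂) * (θ₁ - θ₃) * (θ₂ - θ₃)) = 0 := by
        linear_combination (θ₂ - θ₃) * q₁ - (θ₁ - θ₃) * q₂ + (θ₁ - θ₂) * q₃
      simpa [sub_eq_zero, h₁₂, h₁₃, h₂₃] using this
    have hc₁ : c₁ = 0 := by
      have : c₁ * (θ₁ - θ₂) = 0 := by
        linear_combination q₁ - q₂ - (θ₁ + θ₂) * (θ₁ - θ₂) * hc₂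
      simpa [sub_eq_zero, h₁₂] using this
    exact ⟨hc₂, hc₁, by linear_combination q₁ - θ₁ * hc₁ - θ₁ ^ 2 * hc₂⟩
  · rintro ⟨rfl, rfl, rfl⟩ θ -
    ring

variable [CharZero K]

theorem vieta_of_depressed_cubic {a b θ₁ θ₂ θ₃ : K}
    (h : ∀ x : K, x ^ 3 + a * x + b = (x - θ₁) * (x - θ₂) * (x - θ₃)) :
    θ₁ + θ₂ + θ₃ = 0 ∧ θ₁ * θ₂ + θ₁ * θ₃ + θ₂ * θ₃ = a ∧ θ₁ * θ₂ * θ₃ = -b := by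
  refine ⟨?_, ?_, by linear_combination h 0⟩
  · linear_combination (h 1 + h (-1)) / 2 - h 0
  · linear_combination (h (-1) - h 1) / 2

theorem sq_vandermonde_eq_disc {a b θ₁ θ₂ θ₃ : K}
    (h : ∀ x : K, x ^ 3 + a * x + b = (x - θ₁) * (x - θ₂) * (x - θ₃)) :
    ((θ₁ - θ₂) * (θ₁ - θ₃) * (θ₂ - θ₃)) ^ 2 = -4 * a ^ 3 - 27 * b ^ 2 := by
  obtain ⟨hs₁, hs₂, hs₃⟩ := vieta_of_depressed_cubic h
  have hθ₃ : θ₃ = -θ₁ - θ₂ := by linear_combination hs₁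
  have hb : b = -(θ₁ * θ₂ * θ₃) := by linear_combination hs₃
  subst hb hs₂ hθ₃
  ring

theorem roots_pairwise_ne_of_disc_ne_zero {a b θ₁ θ₂ θ₃ : K}
    (h : ∀ x : K, x ^ 3 + a * x + b = (x - θ₁) * (x - θ₂) * (x - θ₃))
    (hdisc : -4 * a ^ 3 - 27 * b ^ 2 ≠ 0) :
    θ₁ ≠ θ₂ ∧ θ₁ ≠ θ₃ ∧ θ₂ ≠ θ₃ := by
  rw [← sq_vandermonde_eq_disc h] at hdisc
  simpa [sub_eq_zero, not_or, and_assoc] using hdisc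

theorem cast_f₅ (a D a₀ a₁ a₂ : ℚ) :
    ((f₅ a D a₀ a₁ a₂ : ℚ) : K) = f₅ (a : K) D a₀ a₁ a₂ := by
  simp [f₅]

theorem cast_g₅ (a b D t a₀ a₁ a₂ : ℚ) :
    ((g₅ a b D t a₀ a₁ a₂ : ℚ) : K) = g₅ (a : K) b D t a₀ a₁ a₂ := by
  simp [g₅]

theorem cast_h₅ (a b D t a₀ a₁ a₂ : ℚ) :
    ((h₅ a b D t a₀ a₁ a₂ : ℚ) : K) = h₅ (a : K) b D t a₀ a₁ a₂ := by
  simp [h₅]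

end Field

end TwistedModularCurve

open TwistedModularCurve in
/-- Theorem 1.2 of the paper: the defining equations of `X⁵_E(8)` hold iff the
coefficient-comparison identity (with scaling factor `D`) holds at each root of
`x³ + ax + b`. -/
theorem stmt_1 (a b D : ℚ) (hD : D = -4 * a ^ 3 - 27 * b ^ 2) (hD0 : D ≠ 0)
    (θ₁ θ₂ θ₃ : ℂ)
    (hroots : ∀ x : ℂ, x ^ 3 + (a : ℂ) * x + (b : ℂ) = (x - θ₁) * (x - θ₂) * (x - θ₃))
    (t a₀ a₁ a₂ : ℚ) :
    (-a * a₂ ^ 2 + 2 * a₀ * a₂ + a₁ ^ 2 + 2 * D / 9 = 0 ∧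
      -2 * a * a₁ * a₂ - b * a₂ ^ 2 + 2 * a₀ * a₁ + 2 * D / 3 * t = 0 ∧
      -2 * b * a₁ * a₂ + a₀ ^ 2 + D * (-t ^ 2 + a / 9) = 0) ↔
    ∀ θ ∈ ({θ₁, θ₂, θ₃} : Set ℂ),
      ((a₀ : ℂ) + (a₁ : ℂ) * θ + (a₂ : ℂ) * θ ^ 2) ^ 2 =
        (D : ℂ) * ((t : ℂ) ^ 2 - 2 / 3 * θ * (t : ℂ) - (2 * θ ^ 2 + (a : ℂ)) / 9) := by
  have hdisc : -4 * (a : ℂ) ^ 3 - 27 * (b : ℂ) ^ 2 ≠ 0 := by exact_mod_cast hD ▸ hD0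
  obtain ⟨h₁₂, h₁₃, h₂₃⟩ := roots_pairwise_ne_of_disc_ne_zero hroots hdisc
  have hroot : ∀ θ ∈ ({θ₁, θ₂, θ₃} : Set ℂ), θ ^ 3 + (a : ℂ) * θ + b = 0 := by
    rintro θ (rfl | rfl | rfl) <;> simp [hroots]
  calc _ ↔ f₅ a D a₀ a₁ a₂ = 0 ∧ g₅ a b D t a₀ a₁ a₂ = 0 ∧ h₅ a b D t a₀ a₁ a₂ = 0 := Iff.rfl
    _ ↔ f₅ (a : ℂ) D a₀ a₁ a₂ = 0 ∧ g₅ (a : ℂ) b D t a₀ a₁ a₂ = 0 ∧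
          h₅ (a : ℂ) b D t a₀ a₁ a₂ = 0 := by
        simp only [← Rat.cast_eq_zero (α := ℂ), cast_f₅, cast_g₅, cast_h₅]
    _ ↔ _ := (quadratic_eval_three_eq_zero_iff h₁₂ h₁₃ h₂₃).symm
    _ ↔ _ := by
      refine forall₂_congr fun θ hθ => ?_
      rw [← sq_sub_eq_quadratic_of_isRoot (hroot θ hθ), sub_eq_zero]
end

section
/- Let a, b ∈ ℚ with -4a³ - 27b² ≠ 0 and let θ₁, θ₂, θ₃ ∈ ℂ be the (necessarily distinct) roots of x³ + ax + b. Then for all t, a₀, a₁, a₂ ∈ ℚ, the three equations f₇ = 0, g₇ = 0, h₇ = 0 hold simultaneously if and only if for every j ∈ {1,2,3} one has (a₀ + a₁θⱼ + a₂θⱼ²)² = -(3θⱼ² + a)·(t² - (2/3)θⱼ·t - (2θⱼ² + a)/9). -/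
/-!
At a root `θ` of `x³ + ax + b`, the difference of the two sides of the coefficient-comparison
identity reduces modulo the cubic to `f₇ θ² + g₇ θ + h₇`. So the identity holds at the three
roots iff this quadratic in `θ` vanishes at three points, and these are distinct because the
discriminant `-4a³ - 27b² = ((θ₁ - θ₂)(θ₁ - θ₃)(θ₂ - θ₃))²` is nonzero; a quadratic with three
distinct zeros is zero, i.e. `f₇ = g₇ = h₇ = 0`.
-/

section TwistedCurve

variable {K : Type*} [Field K]

def f₇ (a t a₀ a₁ a₂ : K) : K :=
  3 * t ^ 2 + a / 9 - a * a₂ ^ 2 + 2 * a₀ * a₂ + a₁ ^ 2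

def g₇ (a b t a₀ a₁ a₂ : K) : K :=
  4 / 3 * a * t + 2 / 3 * b - 2 * a * a₁ * a₂ - b * a₂ ^ 2 + 2 * a₀ * a₁

def h₇ (a b t a₀ a₁ a₂ : K) : K :=
  a * t ^ 2 + 2 * b * t - 1 / 9 * a ^ 2 - 2 * b * a₁ * a₂ + a₀ ^ 2

variable [CharZero K]

theorem sq_add_eq_f₇_g₇_h₇_add_mul_cubic (a b t a₀ a₁ a₂ θ : K) :
    (a₀ + a₁ * θ + a₂ * θ ^ 2) ^ 2 + (3 * θ ^ 2 + a) * (t ^ 2 - 2 / 3 * θ * t - (2 * θ ^ 2 + a) / 9)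
      = f₇ a t a₀ a₁ a₂ * θ ^ 2 + g₇ a b t a₀ a₁ a₂ * θ + h₇ a b t a₀ a₁ a₂
        + ((a₂ ^ 2 - 2 / 3) * θ + 2 * a₁ * a₂ - 2 * t) * (θ ^ 3 + a * θ + b) := by
  unfold f₇ g₇ h₇
  ring

theorem sq_eq_iff_f₇_g₇_h₇_of_isRoot {a b θ : K} (hθ : θ ^ 3 + a * θ + b = 0) (t a₀ a₁ a₂ : K) :
    (a₀ + a₁ * θ + a₂ * θ ^ 2) ^ 2 = -(3 * θ ^ 2 + a) * (t ^ 2 - 2 / 3 * θ * t - (2 * θ ^ 2 + a) / 9)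
      ↔ f₇ a t a₀ a₁ a₂ * θ ^ 2 + g₇ a b t a₀ a₁ a₂ * θ + h₇ a b t a₀ a₁ a₂ = 0 := by
  have := sq_add_eq_f₇_g₇_h₇_add_mul_cubic a b t a₀ a₁ a₂ θ
  rw [hθ, mul_zero, add_zero] at this
  rw [← this, neg_mul, ← add_eq_zero_iff_eq_neg]

theorem Rat.cast_f₇ (a t a₀ a₁ a₂ : ℚ) :
    ((f₇ a t a₀ a₁ a₂ : ℚ) : K) = f₇ (a : K) t a₀ a₁ a₂ := by
  simp [f₇]

theorem Rat.cast_g₇ (a b t a₀ a₁ a₂ : ℚ) :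
    ((g₇ a b t a₀ a₁ a₂ : ℚ) : K) = g₇ (a : K) b t a₀ a₁ a₂ := by
  simp [g₇]

theorem Rat.cast_h₇ (a b t a₀ a₁ a₂ : ℚ) :
    ((h₇ a b t a₀ a₁ a₂ : ℚ) : K) = h₇ (a : K) b t a₀ a₁ a₂ := by
  simp [h₇]

end TwistedCurve

section DepressedCubic

variable {K : Type*} [Field K] {a b θ₁ θ₂ θ₃ : K}

theorem vieta_depressed_cubic [CharZero K]
    (hroots : ∀ x : K, x ^ 3 + a * x + b = (x - θ₁) * (x - θ₂) * (x - θ₃)) :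
    θ₁ + θ₂ + θ₃ = 0 ∧ θ₁ * θ₂ + θ₁ * θ₃ + θ₂ * θ₃ = a ∧ θ₁ * θ₂ * θ₃ = -b :=
  ⟨by linear_combination (hroots 1 + hroots (-1) - 2 * hroots 0) / 2,
    by linear_combination (hroots (-1) - hroots 1) / 2,
    by linear_combination hroots 0⟩

theorem sq_prod_sub_roots_eq_disc [CharZero K]
    (hroots : ∀ x : K, x ^ 3 + a * x + b = (x - θ₁) * (x - θ₂) * (x - θ₃)) :
    ((θ₁ - θ₂) * (θ₁ - θ₃) * (θ₂ - θ₃)) ^ 2 = -4 * a ^ 3 - 27 * b ^ 2 := by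
  obtain ⟨hs, hp, hq⟩ := vieta_depressed_cubic hroots
  obtain rfl : b = -(θ₁ * θ₂ * θ₃) := by linear_combination hq
  obtain rfl : θ₃ = -θ₁ - θ₂ := by linear_combination hs
  subst hp
  ring

theorem roots_pairwise_ne_of_disc_ne_zero [CharZero K] (hD : -4 * a ^ 3 - 27 * b ^ 2 ≠ 0)
    (hroots : ∀ x : K, x ^ 3 + a * x + b = (x - θ₁) * (x - θ₂) * (x - θ₃)) :
    θ₁ ≠ θ₂ ∧ θ₁ ≠ θ₃ ∧ θ₂ ≠ θ₃ := by
  rw [← sq_prod_sub_roots_eq_disc hroots] at hD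
  simpa [sub_eq_zero, and_assoc] using hD

theorem isRoot_of_mem_roots
    (hroots : ∀ x : K, x ^ 3 + a * x + b = (x - θ₁) * (x - θ₂) * (x - θ₃))
    {θ : K} (hθ : θ ∈ ({θ₁, θ₂, θ₃} : Set K)) : θ ^ 3 + a * θ + b = 0 := by
  rcases hθ with rfl | rfl | rfl <;> rw [hroots] <;> ring

end DepressedCubic

theorem forall_mem_three_quadratic_eq_zero_iff {K : Type*} [Field K] {x y z p q r : K}
    (hxy : x ≠ y) (hxz : x ≠ z) (hyz : y ≠ z) :
    (∀ θ ∈ ({x, y, z} : Set K), p * θ ^ 2 + q * θ + r = 0) ↔ p = 0 ∧ q = 0 ∧ r = 0 := by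
  refine ⟨fun h => ?_, by rintro ⟨rfl, rfl, rfl⟩ θ -; ring⟩
  have ex := h x (by simp)
  have ey := h y (by simp)
  have ez := h z (by simp)
  have dxy : p * (x + y) + q = 0 :=
    mul_left_cancel₀ (sub_ne_zero.mpr hxy) (by linear_combination ex - ey)
  have dxz : p * (x + z) + q = 0 :=
    mul_left_cancel₀ (sub_ne_zero.mpr hxz) (by linear_combination ex - ez)
  have hp : p = 0 := mul_left_cancel₀ (sub_ne_zero.mpr hyz) (by linear_combination dxy - dxz)
  have hq : q = 0 := by linear_combination dxy - (x + y) * hp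
  exact ⟨hp, hq, by linear_combination ex - x ^ 2 * hp - x * hq⟩

/-- Theorem 1.4 of the paper: the defining equations of `X⁷_E(8)` hold iff the
coefficient-comparison identity (with scaling factor `δⱼ = -(3θⱼ² + a)`) holds
at each root of `x³ + ax + b`. -/
theorem stmt_3 (a b : ℚ) (hD : -4 * a ^ 3 - 27 * b ^ 2 ≠ 0)
    (θ₁ θ₂ θ₃ : ℂ)
    (hroots : ∀ x : ℂ, x ^ 3 + (a : ℂ) * x + (b : ℂ) = (x - θ₁) * (x - θ₂) * (x - θ₃))
    (t a₀ a₁ a₂ : ℚ) :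
    (3 * t ^ 2 + a / 9 - a * a₂ ^ 2 + 2 * a₀ * a₂ + a₁ ^ 2 = 0 ∧
      4 / 3 * a * t + 2 / 3 * b - 2 * a * a₁ * a₂ - b * a₂ ^ 2 + 2 * a₀ * a₁ = 0 ∧
      a * t ^ 2 + 2 * b * t - 1 / 9 * a ^ 2 - 2 * b * a₁ * a₂ + a₀ ^ 2 = 0) ↔
    ∀ θ ∈ ({θ₁, θ₂, θ₃} : Set ℂ),
      ((a₀ : ℂ) + (a₁ : ℂ) * θ + (a₂ : ℂ) * θ ^ 2) ^ 2 =
        -(3 * θ ^ 2 + (a : ℂ)) *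
          ((t : ℂ) ^ 2 - 2 / 3 * θ * (t : ℂ) - (2 * θ ^ 2 + (a : ℂ)) / 9) := by
  have hDC : -4 * (a : ℂ) ^ 3 - 27 * (b : ℂ) ^ 2 ≠ 0 := by exact_mod_cast hD
  obtain ⟨h12, h13, h23⟩ := roots_pairwise_ne_of_disc_ne_zero hDC hroots
  change f₇ a t a₀ a₁ a₂ = 0 ∧ g₇ a b t a₀ a₁ a₂ = 0 ∧ h₇ a b t a₀ a₁ a₂ = 0 ↔ _
  rw [← Rat.cast_eq_zero (α := ℂ), ← Rat.cast_eq_zero (α := ℂ), ← Rat.cast_eq_zero (α := ℂ),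
    Rat.cast_f₇, Rat.cast_g₇, Rat.cast_h₇, ← forall_mem_three_quadratic_eq_zero_iff h12 h13 h23]
  exact forall₂_congr fun θ hθ =>
    (sq_eq_iff_f₇_g₇_h₇_of_isRoot (isRoot_of_mem_roots hroots hθ) _ _ _ _).symm
end

section
/- Let v = [[1,2],[2,3]] ∈ GL₂(ℤ/4ℤ). Then: (i) {I, -I, v, -v} is a normal subgroup of GL₂(ℤ/4ℤ); (ii) for every unit r ∈ (ℤ/8ℤ)* there exists A ∈ GL₂(ℤ/8ℤ) with det A = r whose reduction modulo 4 lies in {I, -I, v, -v}; (iii) every A ∈ GL₂(ℤ/8ℤ) with det A = 1 whose reduction modulo 4 lies in {I, -I, v, -v} satisfies A ≡ I or A ≡ -I modulo 4. -/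
/-!
Matrices `1 + 2Y` over `ℤ/4ℤ` depend only on `Y mod 2`, and since `4 = 0` the map `Y ↦ 1 + 2Y` is a
homomorphism from `(Mₙ(𝔽₂), +)` to `GLₙ(ℤ/4ℤ)`, under which conjugation by `g` becomes conjugation
by `g mod 2`. The set `{±I, ±v}` is the image of `𝔽₂[w] = {0, 1, w, w + 1}` for `w = [[0,1],[1,1]]`,
and `𝔽₂[w]` is stable under conjugation because `w` and `w + 1 = w²` are the two elements of order 3
of `GL₂(𝔽₂) ≅ S₃`. As `det v = -1`, only `±I` in it have determinant one, and every `r ∈ (ℤ/8ℤ)ˣ`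
is the determinant of `[[1,0],[0,r]]` (if `r ≡ 1 mod 4`) or of `[[1,2],[2,r+4]]` (if `r ≡ 3 mod 4`).
-/

open Matrix

namespace ZMod

abbrev modTwo : ZMod 4 →+* ZMod 2 := ZMod.castHom (show 2 ∣ 4 by norm_num) (ZMod 2)

abbrev modFour : ZMod 8 →+* ZMod 4 := ZMod.castHom (show 4 ∣ 8 by norm_num) (ZMod 4)

lemma two_mul_eq_of_modTwo_eq {x y : ZMod 4} (h : modTwo x = modTwo y) : 2 * x = 2 * y := by
  revert x y; decide

end ZMod

open ZMod

namespace Matrix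

variable {n : Type*}

lemma two_smul_eq_of_map_modTwo_eq {X X' : Matrix n n (ZMod 4)}
    (h : X.map modTwo = X'.map modTwo) : (2 : ZMod 4) • X = (2 : ZMod 4) • X' := by
  ext i j
  exact two_mul_eq_of_modTwo_eq (congrFun₂ h i j)

def liftModTwo (Y : Matrix n n (ZMod 2)) : Matrix n n (ZMod 4) := Y.map fun x => (x.val : ZMod 4)

lemma map_modTwo_liftModTwo (Y : Matrix n n (ZMod 2)) : (liftModTwo Y).map modTwo = Y := by
  ext; simp [liftModTwo]

variable [DecidableEq n]

def oneAddTwo (Y : Matrix n n (ZMod 2)) : Matrix n n (ZMod 4) := 1 + (2 : ZMod 4) • liftModTwo Y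

lemma one_add_two_smul_eq_oneAddTwo (X : Matrix n n (ZMod 4)) :
    1 + (2 : ZMod 4) • X = oneAddTwo (X.map modTwo) := by
  rw [oneAddTwo, two_smul_eq_of_map_modTwo_eq (map_modTwo_liftModTwo _).symm]

@[simp]
lemma oneAddTwo_zero : oneAddTwo (0 : Matrix n n (ZMod 2)) = 1 := by
  simp [oneAddTwo, liftModTwo]

variable [Fintype n]

lemma oneAddTwo_add (Y Y' : Matrix n n (ZMod 2)) :
    oneAddTwo (Y + Y') = oneAddTwo Y * oneAddTwo Y' := by
  have h4 : (2 : ZMod 4) * 2 = 0 := by decide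
  have h : oneAddTwo Y * oneAddTwo Y' = 1 + (2 : ZMod 4) • (liftModTwo Y + liftModTwo Y') := by
    simp only [oneAddTwo, add_mul, mul_add, one_mul, mul_one, smul_mul_smul_comm, h4, zero_smul,
      smul_add]
    abel
  rw [h, one_add_two_smul_eq_oneAddTwo, Matrix.map_add _ (map_add modTwo), map_modTwo_liftModTwo,
    map_modTwo_liftModTwo]

lemma conj_oneAddTwo {a b : Matrix n n (ZMod 4)} (hab : a * b = 1) (Y : Matrix n n (ZMod 2)) :
    a * oneAddTwo Y * b = oneAddTwo (a.map modTwo * Y * b.map modTwo) := by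
  rw [oneAddTwo, mul_add, add_mul, mul_one, hab, mul_smul_comm, smul_mul_assoc,
    one_add_two_smul_eq_oneAddTwo, Matrix.map_mul, Matrix.map_mul, map_modTwo_liftModTwo]

def oneAddTwoHom : Multiplicative (Matrix n n (ZMod 2)) →* GL n (ZMod 4) :=
  MonoidHom.toHomUnits
    { toFun := fun Y => oneAddTwo Y.toAdd
      map_one' := oneAddTwo_zero
      map_mul' := fun Y Y' => oneAddTwo_add Y.toAdd Y'.toAdd }

lemma coe_oneAddTwoHom (Y : Multiplicative (Matrix n n (ZMod 2))) :
    (oneAddTwoHom Y : Matrix n n (ZMod 4)) = oneAddTwo Y.toAdd := rfl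

lemma conj_oneAddTwoHom (g : GL n (ZMod 4)) (Y : Matrix n n (ZMod 2)) :
    g * oneAddTwoHom (.ofAdd Y) * g⁻¹ =
      oneAddTwoHom (.ofAdd ((GeneralLinearGroup.map modTwo g : Matrix n n (ZMod 2)) * Y *
        (GeneralLinearGroup.map modTwo g⁻¹ : Matrix n n (ZMod 2)))) := by
  ext : 1
  simp only [Units.val_mul, coe_oneAddTwoHom, toAdd_ofAdd]
  rw [conj_oneAddTwo (by rw [← Units.val_mul, mul_inv_cancel, Units.val_one])]
  rfl

end Matrix

namespace GL2ZMod4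

abbrev w : Matrix (Fin 2) (Fin 2) (ZMod 2) := !![0, 1; 1, 1]

abbrev v : Matrix (Fin 2) (Fin 2) (ZMod 4) := !![1, 2; 2, 3]

lemma conj_w {a b : Matrix (Fin 2) (Fin 2) (ZMod 2)} (hab : a * b = 1) :
    a * w * b = w ∨ a * w * b = w + 1 := by
  revert a b; decide

def spanOneW : AddSubgroup (Matrix (Fin 2) (Fin 2) (ZMod 2)) where
  carrier := {0, 1, w, w + 1}
  zero_mem' := by simp
  add_mem' := by
    rintro a b (rfl | rfl | rfl | rfl) (rfl | rfl | rfl | rfl) <;> decide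
  neg_mem' := by
    rintro a (rfl | rfl | rfl | rfl) <;> decide

lemma coe_spanOneW : (spanOneW : Set (Matrix (Fin 2) (Fin 2) (ZMod 2))) = {0, 1, w, w + 1} := rfl

lemma conj_mem_spanOneW {a b : Matrix (Fin 2) (Fin 2) (ZMod 2)} (hab : a * b = 1)
    {Y : Matrix (Fin 2) (Fin 2) (ZMod 2)} (hY : Y ∈ spanOneW) : a * Y * b ∈ spanOneW := by
  have hone : a * 1 * b ∈ spanOneW := by rw [mul_one, hab]; exact Or.inr (Or.inl rfl)
  have hw : a * w * b ∈ spanOneW := by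
    rcases conj_w hab with h | h <;> rw [h]
    exacts [Or.inr (Or.inr (Or.inl rfl)), Or.inr (Or.inr (Or.inr rfl))]
  rcases hY with rfl | rfl | rfl | rfl
  · simp
  · exact hone
  · exact hw
  · rw [mul_add, add_mul]; exact spanOneW.add_mem hw hone

def kleinV : Subgroup (GL (Fin 2) (ZMod 4)) :=
  (AddSubgroup.toSubgroup spanOneW).map oneAddTwoHom

lemma kleinV_normal : kleinV.Normal := by
  constructor
  rintro _ ⟨Y, hY, rfl⟩ g
  have hg : (GeneralLinearGroup.map modTwo g : Matrix (Fin 2) (Fin 2) (ZMod 2)) *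
      (GeneralLinearGroup.map modTwo g⁻¹ : Matrix (Fin 2) (Fin 2) (ZMod 2)) = 1 := by
    rw [← Units.val_mul, ← map_mul, mul_inv_cancel, map_one, Units.val_one]
  rw [← ofAdd_toAdd Y, conj_oneAddTwoHom]
  exact ⟨_, conj_mem_spanOneW hg hY, rfl⟩

lemma image_oneAddTwo_spanOneW :
    oneAddTwo '' (spanOneW : Set (Matrix (Fin 2) (Fin 2) (ZMod 2))) = {1, -1, v, -v} := by
  have h1 : oneAddTwo (1 : Matrix (Fin 2) (Fin 2) (ZMod 2)) = -1 := by decide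
  have hw : oneAddTwo w = v := by decide
  have hw1 : oneAddTwo (w + 1) = -v := by decide
  simp only [coe_spanOneW, Set.image_insert_eq, Set.image_singleton, oneAddTwo_zero, h1, hw, hw1]

lemma mem_kleinV_iff (A : GL (Fin 2) (ZMod 4)) :
    A ∈ kleinV ↔ (A : Matrix (Fin 2) (Fin 2) (ZMod 4)) ∈ ({1, -1, v, -v} : Set _) := by
  rw [← image_oneAddTwo_spanOneW, kleinV, Subgroup.mem_map]
  simp [Units.ext_iff, coe_oneAddTwoHom]

lemma eq_one_or_eq_neg_one_of_det_eq_one {B : Matrix (Fin 2) (Fin 2) (ZMod 4)}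
    (hB : B ∈ ({1, -1, v, -v} : Set _)) (hdet : B.det = 1) : B = 1 ∨ B = -1 := by
  rcases hB with rfl | rfl | rfl | rfl
  · exact Or.inl rfl
  · exact Or.inr rfl
  all_goals exact absurd hdet (by decide)

lemma exists_det_eq_and_map_modFour_eq (r : (ZMod 8)ˣ) :
    ∃ M : Matrix (Fin 2) (Fin 2) (ZMod 8),
      M.det = r ∧ (M.map modFour = 1 ∨ M.map modFour = v) := by
  have hr : (r : ZMod 8) = 1 ∨ (r : ZMod 8) = 3 ∨ (r : ZMod 8) = 5 ∨ (r : ZMod 8) = 7 := by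
    revert r; decide
  rcases hr with h | h | h | h <;> rw [h]
  exacts [⟨!![1, 0; 0, 1], by decide⟩, ⟨!![1, 2; 2, 7], by decide⟩, ⟨!![1, 0; 0, 5], by decide⟩,
    ⟨!![1, 2; 2, 3], by decide⟩]

end GL2ZMod4

/-- Section 5 of the paper, exactness of `1 → H → H' → (ℤ/8ℤ)* → 1`:
(i) `{±I, ±v}` is a normal subgroup of `GL₂(ℤ/4ℤ)`;
(ii) every unit of `ℤ/8ℤ` is the determinant of some matrix in `GL₂(ℤ/8ℤ)`
whose reduction mod 4 lies in `{±I, ±v}`;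
(iii) a determinant-one matrix in `GL₂(ℤ/8ℤ)` whose reduction mod 4 lies in
`{±I, ±v}` reduces to `±I` mod 4. -/
theorem stmt_12 (v : Matrix (Fin 2) (Fin 2) (ZMod 4)) (hv : v = !![1, 2; 2, 3]) :
    (∃ S : Subgroup (GL (Fin 2) (ZMod 4)), S.Normal ∧
      ∀ A : GL (Fin 2) (ZMod 4), A ∈ S ↔
        (A : Matrix (Fin 2) (Fin 2) (ZMod 4)) ∈
          ({1, -1, v, -v} : Set (Matrix (Fin 2) (Fin 2) (ZMod 4)))) ∧
    (∀ r : (ZMod 8)ˣ, ∃ A : GL (Fin 2) (ZMod 8),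
      (A : Matrix (Fin 2) (Fin 2) (ZMod 8)).det = (r : ZMod 8) ∧
      (A : Matrix (Fin 2) (Fin 2) (ZMod 8)).map
          (ZMod.castHom (show (4:ℕ) ∣ 8 by norm_num) (ZMod 4)) ∈
        ({1, -1, v, -v} : Set (Matrix (Fin 2) (Fin 2) (ZMod 4)))) ∧
    (∀ A : GL (Fin 2) (ZMod 8),
      (A : Matrix (Fin 2) (Fin 2) (ZMod 8)).det = 1 →
      (A : Matrix (Fin 2) (Fin 2) (ZMod 8)).map
          (ZMod.castHom (show (4:ℕ) ∣ 8 by norm_num) (ZMod 4)) ∈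
        ({1, -1, v, -v} : Set (Matrix (Fin 2) (Fin 2) (ZMod 4))) →
      ((A : Matrix (Fin 2) (Fin 2) (ZMod 8)).map
          (ZMod.castHom (show (4:ℕ) ∣ 8 by norm_num) (ZMod 4)) = 1 ∨
        (A : Matrix (Fin 2) (Fin 2) (ZMod 8)).map
          (ZMod.castHom (show (4:ℕ) ∣ 8 by norm_num) (ZMod 4)) = -1)) := by
  subst hv
  refine ⟨⟨GL2ZMod4.kleinV, GL2ZMod4.kleinV_normal, GL2ZMod4.mem_kleinV_iff⟩, fun r => ?_,
    fun A hdet hA => GL2ZMod4.eq_one_or_eq_neg_one_of_det_eq_one hA ?_⟩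
  · obtain ⟨M, hdet, hM⟩ := GL2ZMod4.exists_det_eq_and_map_modFour_eq r
    refine ⟨((isUnit_iff_isUnit_det M).2 (hdet ▸ r.isUnit)).unit, hdet, ?_⟩
    rcases hM with h | h
    exacts [Or.inl h, Or.inr (Or.inr (Or.inl h))]
  · rw [← RingHom.mapMatrix_apply, ← RingHom.map_det, hdet, map_one]
end

section
/- For every p ∈ ℚ with p² ≠ 12, set a = (27/8)·(p² - 12p + 12)²/(p² - 12)², b = a, D = -4a³ - 27a², t = -(1/2)·(p² - 12p + 12)/(p² - 12), a₀ = (-243/32)·(p² - 12p + 12)³(p² - 4p + 12)/(p² - 12)⁴, a₁ = (81/8)·(p² - 12p + 12)²(p² - 4p + 12)/(p² - 12)³, and a₂ = 0. Then f₅ = 0, g₅ = 0, and h₅ = 0. -/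
/-!
Writing `s = (p² - 12p + 12)/(p² - 12)` and `r = (p² - 4p + 12)/(p² - 12)`, each of the three
equations becomes a multiple of `3r² - s² - 2`, and `p ↦ (s, r)` is the parametrisation of the conic
`3r² = s² + 2` by lines through its point `(1, 1)`.
-/

theorem X5E8_equations_of_conic {K : Type*} [Field K] [CharZero K] {s r a b D t a₀ a₁ a₂ : K}
    (hconic : 3 * r ^ 2 = s ^ 2 + 2) (ha : a = 27 / 8 * s ^ 2) (hb : b = a)
    (hD : D = -4 * a ^ 3 - 27 * a ^ 2) (ht : t = -s / 2) (ha₀ : a₀ = -243 / 32 * s ^ 3 * r)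
    (ha₁ : a₁ = 81 / 8 * s ^ 2 * r) (ha₂ : a₂ = 0) :
    -a * a₂ ^ 2 + 2 * a₀ * a₂ + a₁ ^ 2 + 2 * D / 9 = 0 ∧
    -2 * a * a₁ * a₂ - b * a₂ ^ 2 + 2 * a₀ * a₁ + 2 * D / 3 * t = 0 ∧
    -2 * b * a₁ * a₂ + a₀ ^ 2 + D * (-t ^ 2 + a / 9) = 0 := by
  subst ha₂ hb hD ht ha₀ ha₁ ha
  refine ⟨?_, ?_, ?_⟩
  · linear_combination 3 * (27 / 8) ^ 2 * s ^ 4 * hconic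
  · linear_combination -(3 ^ 8 / 128) * s ^ 5 * hconic
  · linear_combination 3 ^ 9 / 2 ^ 10 * s ^ 6 * hconic

theorem conic_parametrization {K : Type*} [Field K] {p : K} (hp : p ^ 2 - 12 ≠ 0) :
    3 * ((p ^ 2 - 4 * p + 12) / (p ^ 2 - 12)) ^ 2 =
      ((p ^ 2 - 12 * p + 12) / (p ^ 2 - 12)) ^ 2 + 2 := by
  field_simp
  ring

/-- The genus-zero curve on the surface `S_{a,5}` from the proof of
Proposition 7.3 of the paper: the parametrised point satisfies the defining
equations `f₅ = g₅ = h₅ = 0` of `X⁵_E(8)`. -/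
theorem stmt_16 (p a b D t a₀ a₁ a₂ : ℚ) (hp : p ^ 2 ≠ 12)
    (ha : a = 27 / 8 * (p ^ 2 - 12 * p + 12) ^ 2 / (p ^ 2 - 12) ^ 2)
    (hb : b = a)
    (hD : D = -4 * a ^ 3 - 27 * a ^ 2)
    (ht : t = -(1 / 2) * (p ^ 2 - 12 * p + 12) / (p ^ 2 - 12))
    (ha₀ : a₀ = -243 / 32 * (p ^ 2 - 12 * p + 12) ^ 3 * (p ^ 2 - 4 * p + 12) / (p ^ 2 - 12) ^ 4)
    (ha₁ : a₁ = 81 / 8 * (p ^ 2 - 12 * p + 12) ^ 2 * (p ^ 2 - 4 * p + 12) / (p ^ 2 - 12) ^ 3)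
    (ha₂ : a₂ = 0) :
    -a * a₂ ^ 2 + 2 * a₀ * a₂ + a₁ ^ 2 + 2 * D / 9 = 0 ∧
    -2 * a * a₁ * a₂ - b * a₂ ^ 2 + 2 * a₀ * a₁ + 2 * D / 3 * t = 0 ∧
    -2 * b * a₁ * a₂ + a₀ ^ 2 + D * (-t ^ 2 + a / 9) = 0 := by
  have hv : p ^ 2 - 12 ≠ 0 := sub_ne_zero.mpr hp
  refine X5E8_equations_of_conic (conic_parametrization hv) ?_ hb hD ?_ ?_ ?_ ha₂
  · rw [ha]; field_simp
  · rw [ht]; field_simp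
  · rw [ha₀]; field_simp
  · rw [ha₁]; field_simp
end
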